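/- For all natural numbers n ≥ 4, E(n) ≤ E(4), where E(n) = (Σ_{ℓ even, 0 ≤ ℓ ≤ n} C_{n-ℓ}C_ℓ) / C_{n+1}. -/

import Mathlib

/-- The even part of the Catalan convolution of total index n, as a fraction of the
full convolution (which equals C_{n+1}). -/
noncomputable def catalanEvenPart (n : ℕ) : ℚ :=
  (∑ ℓ ∈ (Finset.range (n + 1)).filter (fun ℓ => Even ℓ),
      ((catalan (n - ℓ) : ℚ) * (catalan ℓ : ℚ))) / (catalan (n + 1) : ℚ)

/-!
Let `𝒞 = ∑ Cₙ Xⁿ`, so that `𝒞 = 1 + X 𝒞²`, and split `𝒞 = 𝒜 + 𝒟` into its even and odd parts.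
Substituting `-X` for `X` gives `𝒜 - 𝒟 = 1 - X (𝒜 - 𝒟)²`; adding and subtracting the two equations
yields `𝒜 = 1 + 2X𝒜𝒟` and `𝒟 = X (𝒜² + 𝒟²)`. Eliminating `𝒟` gives `𝒜² = 1 + 4X² (𝒜²)²`, the
equation satisfied by `𝒞(4X²)`, hence `𝒜² = ∑ 4ᵐ Cₘ X²ᵐ`. The numerator of `E(n)` is the `n`-th
coefficient of `𝒜 𝒞 = 𝒜² + (𝒜 - 1) / (2X)`, so `E(2m) = 4ᵐ Cₘ / C₂ₘ₊₁` and `E(2m+1) = 1/2`.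
Finally `4ᵐ Cₘ / C₂ₘ₊₁` decreases in `m`, with ratio `4(2m+1)(2m+3) / ((4m+3)(4m+5)) < 1`
between consecutive terms, and `E(4) = 16/21 > 1/2`.
-/

open Finset PowerSeries

namespace PowerSeries

section Semiring

variable {R : Type*} [Semiring R]

noncomputable def evenPart (f : R⟦X⟧) : R⟦X⟧ := mk fun n => if Even n then coeff n f else 0

noncomputable def oddPart (f : R⟦X⟧) : R⟦X⟧ := mk fun n => if Even n then 0 else coeff n f

@[simp]
theorem coeff_evenPart (f : R⟦X⟧) (n : ℕ) :
    coeff n (evenPart f) = if Even n then coeff n f else 0 :=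
  coeff_mk _ _

@[simp]
theorem coeff_oddPart (f : R⟦X⟧) (n : ℕ) :
    coeff n (oddPart f) = if Even n then 0 else coeff n f :=
  coeff_mk _ _

theorem evenPart_add_oddPart (f : R⟦X⟧) : evenPart f + oddPart f = f := by
  ext n
  by_cases hn : Even n <;> simp [hn]

instance [CharZero R] : CharZero R⟦X⟧ :=
  ⟨fun m n h => by simpa using congrArg constantCoeff h⟩

end Semiring

theorem one_sub_X_mul_ne_zero {R : Type*} [Ring R] [Nontrivial R] (g : R⟦X⟧) : 1 - X * g ≠ 0 :=
  fun h => by simpa using congrArg constantCoeff h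

section CommRing

variable {R : Type*} [CommRing R]

theorem rescale_neg_one_eq_evenPart_sub_oddPart (f : R⟦X⟧) :
    rescale (-1) f = evenPart f - oddPart f := by
  ext n
  rcases Nat.even_or_odd n with hn | hn
  · simp [hn.neg_one_pow, hn]
  · simp [hn.neg_one_pow, Nat.not_even_iff_odd.mpr hn]

theorem eq_of_eq_one_add_X_mul_mul_sq [IsDomain R] {a f g : R⟦X⟧}
    (hf : f = 1 + X * a * f ^ 2) (hg : g = 1 + X * a * g ^ 2) : f = g := by
  have h : (f - g) * (1 - X * (a * (f + g))) = 0 := by linear_combination hf - hg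
  exact sub_eq_zero.mp ((mul_eq_zero.mp h).resolve_right (one_sub_X_mul_ne_zero _))

end CommRing

end PowerSeries

theorem catalan_pos (n : ℕ) : 0 < catalan n :=
  Nat.pos_of_ne_zero fun h => n.centralBinom_ne_zero <| by
    rw [← succ_mul_catalan_eq_centralBinom, h, mul_zero]

local notation "𝒞" => PowerSeries.map (Nat.castRingHom ℚ) catalanSeries
local notation "𝒜" => evenPart 𝒞
local notation "𝒟" => oddPart 𝒞

theorem catalanSeries_rat_eq : 𝒞 = 1 + X * 𝒞 ^ 2 := by
  have h := congrArg (PowerSeries.map (Nat.castRingHom ℚ)) catalanSeries_sq_mul_X_add_one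
  simp only [map_add, map_mul, map_pow, map_X, map_one] at h
  linear_combination -h

theorem evenPart_add_oddPart_catalanSeries_rat : 𝒜 + 𝒟 = 1 + X * (𝒜 + 𝒟) ^ 2 := by
  rw [evenPart_add_oddPart]
  exact catalanSeries_rat_eq

theorem evenPart_sub_oddPart_catalanSeries_rat : 𝒜 - 𝒟 = 1 - X * (𝒜 - 𝒟) ^ 2 := by
  rw [← rescale_neg_one_eq_evenPart_sub_oddPart]
  conv_lhs => rw [catalanSeries_rat_eq]
  simp only [map_add, map_one, map_mul, map_pow, rescale_neg_one_X]
  ring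

theorem evenPart_catalanSeries_rat_eq : 𝒜 = 1 + 2 * X * 𝒜 * 𝒟 :=
  mul_left_cancel₀ (two_ne_zero : (2 : ℚ⟦X⟧) ≠ 0) <| by
    linear_combination evenPart_add_oddPart_catalanSeries_rat +
      evenPart_sub_oddPart_catalanSeries_rat

theorem oddPart_catalanSeries_rat_eq : 𝒟 = X * (𝒜 ^ 2 + 𝒟 ^ 2) :=
  mul_left_cancel₀ (two_ne_zero : (2 : ℚ⟦X⟧) ≠ 0) <| by
    linear_combination evenPart_add_oddPart_catalanSeries_rat -
      evenPart_sub_oddPart_catalanSeries_rat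

theorem evenPart_catalanSeries_rat_sq_eq : 𝒜 ^ 2 = 1 + X * (4 * X) * (𝒜 ^ 2) ^ 2 := by
  have hA := evenPart_catalanSeries_rat_eq
  have hD := oddPart_catalanSeries_rat_eq
  have hfactor : (𝒟 * (𝒜 + 1) - 2 * X * 𝒜 ^ 3) * (1 - X * 𝒟) = 0 := by
    linear_combination (𝒜 + 1) * hD - X * 𝒜 ^ 2 * hA
  have hD' := (mul_eq_zero.mp hfactor).resolve_right (one_sub_X_mul_ne_zero _)
  linear_combination (𝒜 + 1) * hA + 2 * X * 𝒜 * hD'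

theorem evenPart_catalanSeries_rat_sq : 𝒜 ^ 2 = rescale 2 (expand 2 two_ne_zero 𝒞) := by
  refine eq_of_eq_one_add_X_mul_mul_sq evenPart_catalanSeries_rat_sq_eq ?_
  conv_lhs => rw [catalanSeries_rat_eq]
  simp only [map_add, map_one, map_mul, map_pow, map_ofNat, expand_X, rescale_X]
  ring

theorem X_mul_evenPart_catalanSeries_rat_mul :
    X * (2 * (𝒜 * 𝒞)) = X * (2 * 𝒜 ^ 2) + (𝒜 - 1) := by
  linear_combination (-2 * X * 𝒜) * evenPart_add_oddPart 𝒞 - evenPart_catalanSeries_rat_eq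

theorem sum_filter_even_catalan_eq_coeff (n : ℕ) :
    ∑ ℓ ∈ (range (n + 1)).filter Even, (catalan (n - ℓ) : ℚ) * catalan ℓ =
      coeff n (𝒜 * 𝒞) := by
  rw [coeff_mul, Nat.sum_antidiagonal_eq_sum_range_succ_mk, sum_filter]
  refine sum_congr rfl fun ℓ _ => ?_
  by_cases hℓ : Even ℓ <;> simp [hℓ, coeff_map, mul_comm]

theorem two_mul_sum_filter_even_catalan (n : ℕ) :
    2 * ∑ ℓ ∈ (range (n + 1)).filter Even, (catalan (n - ℓ) : ℚ) * catalan ℓ =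
      2 * coeff n (rescale 2 (expand 2 two_ne_zero 𝒞)) + coeff (n + 1) 𝒜 := by
  have h := congrArg (coeff (n + 1)) X_mul_evenPart_catalanSeries_rat_mul
  rw [← map_ofNat C 2] at h
  simp only [coeff_succ_X_mul, coeff_C_mul, map_add, map_sub, coeff_one,
    if_neg n.succ_ne_zero, sub_zero] at h
  rw [sum_filter_even_catalan_eq_coeff, ← evenPart_catalanSeries_rat_sq, h]

theorem sum_filter_even_catalan_two_mul (m : ℕ) :
    ∑ ℓ ∈ (range (2 * m + 1)).filter Even, (catalan (2 * m - ℓ) : ℚ) * catalan ℓ =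
      4 ^ m * catalan m := by
  have h := two_mul_sum_filter_even_catalan (2 * m)
  rw [coeff_rescale, coeff_expand_mul, coeff_evenPart, if_neg (by simp [parity_simps])] at h
  norm_num [coeff_map, pow_mul] at h
  exact h

theorem two_mul_sum_filter_even_catalan_two_mul_add_one (m : ℕ) :
    2 * ∑ ℓ ∈ (range (2 * m + 1 + 1)).filter Even, (catalan (2 * m + 1 - ℓ) : ℚ) * catalan ℓ =
      catalan (2 * m + 2) := by
  rw [two_mul_sum_filter_even_catalan, coeff_rescale, coeff_expand_of_not_dvd _ _ _ (by omega),
    coeff_evenPart, if_pos (by simp [parity_simps])]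
  simp [coeff_map]

theorem catalanEvenPart_two_mul (m : ℕ) :
    catalanEvenPart (2 * m) = 4 ^ m * catalan m / catalan (2 * m + 1) := by
  rw [catalanEvenPart, sum_filter_even_catalan_two_mul]

theorem catalanEvenPart_two_mul_add_one (m : ℕ) : catalanEvenPart (2 * m + 1) = 1 / 2 := by
  have hC : (catalan (2 * m + 2) : ℚ) ≠ 0 := by exact_mod_cast (catalan_pos _).ne'
  rw [catalanEvenPart, div_eq_iff hC]
  linear_combination two_mul_sum_filter_even_catalan_two_mul_add_one m / 2

theorem add_two_mul_catalan_succ (n : ℕ) :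
    (n + 2) * catalan (n + 1) = 2 * (2 * n + 1) * catalan n := by
  refine Nat.eq_of_mul_eq_mul_left n.succ_pos ?_
  calc (n + 1) * ((n + 2) * catalan (n + 1)) = (n + 1) * (n + 1).centralBinom := by
        rw [← succ_mul_catalan_eq_centralBinom]
    _ = 2 * (2 * n + 1) * n.centralBinom := Nat.succ_mul_centralBinom_succ n
    _ = (n + 1) * (2 * (2 * n + 1) * catalan n) := by
        rw [← succ_mul_catalan_eq_centralBinom]; ring

theorem catalan_succ_eq_mul_div (n : ℕ) :
    (catalan (n + 1) : ℚ) = 2 * (2 * n + 1) / (n + 2) * catalan n := by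
  have h : ((n + 2 : ℕ) : ℚ) * catalan (n + 1) = (2 * (2 * n + 1) : ℕ) * catalan n := by
    exact_mod_cast add_two_mul_catalan_succ n
  push_cast at h
  field_simp
  linear_combination h

theorem catalanEvenPart_four : catalanEvenPart 4 = 16 / 21 := by
  rw [show 4 = 2 * 2 from rfl, catalanEvenPart_two_mul]
  norm_num [catalan_succ_eq_mul_div, catalan_two]

theorem four_pow_mul_catalan_div_catalan_succ (m : ℕ) :
    (4 : ℚ) ^ (m + 1) * catalan (m + 1) / catalan (2 * (m + 1) + 1) =
      4 ^ m * catalan m / catalan (2 * m + 1) *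
        (4 * (2 * m + 1) * (2 * m + 3) / ((4 * m + 3) * (4 * m + 5))) := by
  rw [show 2 * (m + 1) + 1 = 2 * m + 1 + 1 + 1 by ring, catalan_succ_eq_mul_div (2 * m + 1 + 1),
    catalan_succ_eq_mul_div (2 * m + 1), catalan_succ_eq_mul_div m]
  push_cast
  field_simp
  ring

theorem antitone_four_pow_mul_catalan_div :
    Antitone fun m : ℕ => (4 : ℚ) ^ m * catalan m / catalan (2 * m + 1) := by
  refine antitone_nat_of_succ_le fun m => ?_
  rw [four_pow_mul_catalan_div_catalan_succ]
  refine mul_le_of_le_one_right (by positivity) ((div_le_one (by positivity)).mpr ?_)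
  nlinarith

/-- For all n ≥ 4, E(n) ≤ E(4). -/
theorem catalanEvenPart_le (n : ℕ) (hn : 4 ≤ n) :
    catalanEvenPart n ≤ catalanEvenPart 4 := by
  obtain ⟨m, rfl | rfl⟩ := Nat.even_or_odd' n
  · rw [show 4 = 2 * 2 from rfl, catalanEvenPart_two_mul, catalanEvenPart_two_mul]
    exact antitone_four_pow_mul_catalan_div (by omega)
  · rw [catalanEvenPart_two_mul_add_one, catalanEvenPart_four]
    norm_num
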